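/- arXiv:1711.02461 — 4 statements merged into one kernel-verified Lean document; each statement's English description precedes it below -/
import Mathlib

section
/- The numerator of the even-length palindromic continued fraction [a_n,...,a_2,a_1,a_1,a_2,...,a_n] equals p_n² + q_n², where p_n/q_n = [a_1,...,a_n] with p_n, q_n the standard numerator and denominator of the n-th convergent. -/
/-- The continuant: `cont [a₁,...,aₙ]` is the numerator N[a₁,...,aₙ] of the
continued fraction [a₁,...,aₙ], with N[] = 1. -/
def cont : List ℕ → ℕ
  | [] => 1
  | [a] => a
  | a :: b :: l => a * cont (b :: l) + cont l

/-!
Euler's splitting rule for continuants, `K(l ++ m) = K(l) K(m) + K(l⁻) K(⁻m)` where `l⁻` drops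
the last entry of `l` and `⁻m` the first entry of `m`, together with the reversal symmetry
`K(l.reverse) = K(l)`, turns `K(l.reverse ++ l)` into `K(l)² + K(l.tail)²`.
-/

theorem cont_cons_cons (a b : ℕ) (l : List ℕ) :
    cont (a :: b :: l) = a * cont (b :: l) + cont l := rfl

theorem cont_append : ∀ {l m : List ℕ}, l ≠ [] → m ≠ [] →
    cont (l ++ m) = cont l * cont m + cont l.dropLast * cont m.tail
  | [a], b :: m, _, _ => by simp [cont]
  | [a, x], b :: m, _, _ => by simp [cont]; ring
  | a :: x :: y :: l, m, _, hm => by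
      have ih₁ := cont_append (l := x :: y :: l) (List.cons_ne_nil _ _) hm
      have ih₂ := cont_append (l := y :: l) (List.cons_ne_nil _ _) hm
      simp only [List.cons_append, List.dropLast_cons_cons] at ih₁ ih₂ ⊢
      rw [cont_cons_cons, ih₁, ih₂, cont_cons_cons a x, cont_cons_cons a x]
      ring

theorem cont_concat {l : List ℕ} (hl : l ≠ []) (x : ℕ) :
    cont (l ++ [x]) = x * cont l + cont l.dropLast := by
  rw [cont_append hl (List.cons_ne_nil _ _)]
  simp only [cont, List.tail_cons]
  ring

theorem cont_reverse : ∀ l : List ℕ, cont l.reverse = cont l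
  | [] => rfl
  | [_] => rfl
  | a :: b :: l => by
      rw [List.reverse_cons, cont_concat (by simp), cont_reverse (b :: l), List.dropLast_reverse,
        List.tail_cons, cont_reverse l, cont_cons_cons]

theorem stmt4_general (l : List ℕ) (hl : l ≠ []) :
    cont (l.reverse ++ l) = (cont l) ^ 2 + (cont l.tail) ^ 2 := by
  rw [cont_append (List.reverse_ne_nil_iff.mpr hl) hl, cont_reverse, List.dropLast_reverse,
    cont_reverse]
  ring

/-- The numerator of the palindromification [aₙ,...,a₂,a₁,a₁,a₂,...,aₙ]
equals pₙ² + qₙ², where pₙ = N[a₁,...,aₙ] and qₙ = N[a₂,...,aₙ]. -/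
theorem stmt4 (l : List ℕ) (hl : l ≠ []) (hpos : ∀ x ∈ l, 0 < x) :
    cont (l.reverse ++ l) = (cont l) ^ 2 + (cont l.tail) ^ 2 :=
  stmt4_general l hl
end

section
/- Let [a_1,...,a_n] = p_n/q_n and [a_2,...,a_n] = q_n/r_n (in lowest terms with the standard convergent recursions). Then the odd-length palindromic continued fraction satisfies [a_n,...,a_2,a_1,a_2,...,a_n] = (p_n² − r_n²)/(p_{n-1} p_n − r_{n-1} r_n), where p_{n-1}, r_{n-1} denote the corresponding penultimate convergent numerators. -/
/-!
The continuants of `l` are the entries of the product of the matrices `!![a, 1; 1, 0]` over `l`,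
namely `!![cont l, cont l.dropLast; contD l, contD l.dropLast]`. This product is multiplicative
under concatenation and turns reversal into transposition, so for `l = a :: m` the palindrome
`l.reverse ++ m` has numerator `q (p + r)` and denominator `p' q + q' r`, where `q / r` and
`q' / r'` are the fractions of `m` and `m.dropLast`, `p = a q + r` and `p' = a q' + r'`.
Since `p² - r² = a q (p + r)` and `p' p - r' r = a (p' q + q' r)`, the claimed fraction is the
same one with numerator and denominator multiplied by `a`.
-/

/-- Value of the continued fraction [a₁,...,aₙ] = a₁ + 1/(a₂ + 1/(... + 1/aₙ)). -/
def cfQ : List ℚ → ℚ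
  | [] => 0
  | [a] => a
  | a :: b :: l => a + 1 / cfQ (b :: l)

/-- `contD [a₁,...,aₙ]` is the denominator of the continued fraction
[a₁,...,aₙ], i.e. N[a₂,...,aₙ], with the convention that the empty
continued fraction has denominator 0. -/
def contD : List ℕ → ℕ
  | [] => 0
  | _ :: l => cont l

lemma contD_cons (a : ℕ) (l : List ℕ) : contD (a :: l) = cont l := rfl

lemma cont_cons (a : ℕ) (l : List ℕ) : cont (a :: l) = a * cont l + contD l := by
  cases l <;> simp [cont, contD]

lemma cont_pos {l : List ℕ} (h : ∀ x ∈ l, 0 < x) : 0 < cont l := by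
  induction l with
  | nil => simp [cont]
  | cons a m ih =>
    rw [cont_cons]
    have ha : 0 < a := h a List.mem_cons_self
    have hm := ih fun x hx => h x (List.mem_cons_of_mem a hx)
    positivity

lemma cfQ_map_natCast {l : List ℕ} (h : ∀ x ∈ l, 0 < x) :
    cfQ (l.map ((↑) : ℕ → ℚ)) = cont l / contD l := by
  induction l with
  | nil => simp [cfQ, cont, contD]
  | cons a m ih =>
    cases m with
    | nil => simp [cfQ, cont, contD]
    | cons b t =>
      have hbt : ∀ x ∈ b :: t, 0 < x := fun x hx => h x (List.mem_cons_of_mem a hx)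
      have hq : (cont (b :: t) : ℚ) ≠ 0 := by exact_mod_cast (cont_pos hbt).ne'
      change (a : ℚ) + 1 / cfQ ((b :: t).map ((↑) : ℕ → ℚ)) = _
      rw [ih hbt, cont_cons a, contD_cons a, contD_cons b, one_div, inv_div]
      field_simp
      push_cast
      ring

def contMatrix (l : List ℕ) : Matrix (Fin 2) (Fin 2) ℕ :=
  (l.map fun a => !![a, 1; 1, 0]).prod

@[simp]
lemma contMatrix_nil : contMatrix [] = 1 := rfl

lemma contMatrix_cons (a : ℕ) (l : List ℕ) :
    contMatrix (a :: l) = !![a, 1; 1, 0] * contMatrix l := by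
  simp [contMatrix]

lemma contMatrix_append (l m : List ℕ) :
    contMatrix (l ++ m) = contMatrix l * contMatrix m := by
  simp [contMatrix, List.prod_append]

lemma contMatrix_reverse (l : List ℕ) : contMatrix l.reverse = (contMatrix l).transpose := by
  induction l with
  | nil => simp
  | cons a l ih =>
    have hsymm : (!![a, 1; 1, 0] : Matrix (Fin 2) (Fin 2) ℕ).transpose = !![a, 1; 1, 0] := by
      ext i j; fin_cases i <;> fin_cases j <;> rfl
    rw [List.reverse_cons, contMatrix_append, ih, contMatrix_cons, contMatrix_cons,
      Matrix.transpose_mul, hsymm, contMatrix_nil, mul_one]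

lemma contMatrix_cons_eq (a : ℕ) (l : List ℕ) :
    contMatrix (a :: l) =
      !![cont (a :: l), cont (a :: l).dropLast; contD (a :: l), contD (a :: l).dropLast] := by
  induction l generalizing a with
  | nil => simp [contMatrix, cont, contD]
  | cons b m ih =>
    rw [contMatrix_cons, ih, Matrix.mul_fin_two,
      List.dropLast_cons_of_ne_nil (List.cons_ne_nil b m), cont_cons a, cont_cons a]
    simp [contD]

lemma contMatrix_eq {l : List ℕ} (hl : l ≠ []) :
    contMatrix l = !![cont l, cont l.dropLast; contD l, contD l.dropLast] := by
  obtain ⟨a, m, rfl⟩ := List.exists_cons_of_ne_nil hl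
  exact contMatrix_cons_eq a m

lemma cont_reverse_append {l m : List ℕ} (hl : l ≠ []) (hm : m ≠ []) :
    cont (l.reverse ++ m) = cont l * cont m + contD l * contD m := by
  have h := congrFun₂ (contMatrix_eq (l := l.reverse ++ m) (by simp [hm])) 0 0
  rw [contMatrix_append, contMatrix_reverse, contMatrix_eq hl, contMatrix_eq hm] at h
  simpa [Matrix.mul_apply, eq_comm] using h

lemma contD_reverse_append {l m : List ℕ} (hl : l ≠ []) (hm : m ≠ []) :
    contD (l.reverse ++ m) = cont l.dropLast * cont m + contD l.dropLast * contD m := by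
  have h := congrFun₂ (contMatrix_eq (l := l.reverse ++ m) (by simp [hm])) 1 0
  rw [contMatrix_append, contMatrix_reverse, contMatrix_eq hl, contMatrix_eq hm] at h
  simpa [Matrix.mul_apply, eq_comm] using h

-- `l.map (fun x => (x : ℚ))` elaborates as `map id` of the list-monad coercion `ℕ → ℚ`.
lemma List.map_coe_eq_map_natCast (l : List ℕ) :
    l.map (fun x => (x : ℚ)) = l.map ((↑) : ℕ → ℚ) := by
  simp only [List.map_id', bind, pure]
  exact List.map_eq_flatMap.symm

/-- Here pₙ = cont l, pₙ₋₁ = cont l.dropLast, rₙ = contD l.tail,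
rₙ₋₁ = contD l.tail.dropLast. -/
theorem stmt6 (l : List ℕ) (hl : 2 ≤ l.length) (hpos : ∀ x ∈ l, 0 < x) :
    cfQ ((l.reverse ++ l.tail).map (fun x => (x : ℚ))) =
      ((cont l : ℚ) ^ 2 - (contD l.tail : ℚ) ^ 2) /
        ((cont l.dropLast : ℚ) * (cont l : ℚ) -
          (contD l.tail.dropLast : ℚ) * (contD l.tail : ℚ)) := by
  obtain _ | ⟨a, m⟩ := l
  · simp at hl
  have hm : m ≠ [] := List.ne_nil_of_length_pos (by simp at hl; omega)
  have ha : (a : ℚ) ≠ 0 := by exact_mod_cast (hpos a List.mem_cons_self).ne'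
  have hpal_pos : ∀ x ∈ (a :: m).reverse ++ m, 0 < x := fun x hx =>
    (List.mem_append.1 hx).elim (fun h => hpos x (List.mem_reverse.1 h))
      (fun h => hpos x (List.mem_cons_of_mem a h))
  rw [List.tail_cons, List.map_coe_eq_map_natCast, cfQ_map_natCast hpal_pos,
    cont_reverse_append (List.cons_ne_nil a m) hm, contD_reverse_append (List.cons_ne_nil a m) hm,
    List.dropLast_cons_of_ne_nil hm, cont_cons a m, cont_cons a m.dropLast]
  simp only [contD_cons]
  push_cast
  set q := (cont m : ℚ); set r := (contD m : ℚ)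
  set q' := (cont m.dropLast : ℚ); set r' := (contD m.dropLast : ℚ)
  have hnum : (a * q + r) ^ 2 - r ^ 2 = a * ((a * q + r) * q + q * r) := by ring
  have hden : (a * q' + r') * (a * q + r) - r' * r = a * ((a * q' + r') * q + q' * r) := by ring
  rw [hnum, hden, mul_div_mul_left _ _ ha]
end

section
/- Let p/q = [a_1,...,a_n] in lowest terms with n ≥ 3. The sequence (a_1,...,a_n) is palindromic (a_i = a_{n+1-i} for all i) if and only if p divides q² + (−1)^n. -/
open Matrix

def cfValue (l : List ℕ) : ℚ := cfQ (l.map (fun x => (x : ℚ)))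

lemma cfValue_singleton (a : ℕ) : cfValue [a] = a := rfl

lemma cfValue_cons {a : ℕ} {t : List ℕ} (ht : t ≠ []) :
    cfValue (a :: t) = a + 1 / cfValue t := by
  cases t with
  | nil => exact absurd rfl ht
  | cons b r => rfl

lemma one_le_cfValue {l : List ℕ} (hpos : ∀ x ∈ l, 0 < x) (hne : l ≠ []) :
    1 ≤ cfValue l := by
  induction l with
  | nil => exact absurd rfl hne
  | cons a t ih =>
    have ha : (1 : ℚ) ≤ a := by exact_mod_cast hpos a List.mem_cons_self
    rcases eq_or_ne t [] with rfl | ht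
    · exact ha
    · have hv := ih (fun x hx => hpos x (List.mem_cons_of_mem a hx)) ht
      rw [cfValue_cons ht]
      have : 0 < 1 / cfValue t := one_div_pos.2 (by linarith)
      linarith

lemma one_div_cfValue_mem_Ioc {l : List ℕ} (hpos : ∀ x ∈ l, 0 < x) (hne : l ≠ []) :
    1 / cfValue l ∈ Set.Ioc 0 1 := by
  have hv := one_le_cfValue hpos hne
  exact ⟨one_div_pos.2 (by linarith), (div_le_one (by linarith)).2 hv⟩

/-- Since `a + 1 / v ∈ (a, a + 1]` for `v ≥ 1`, the first partial quotient is determined by the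
value. -/
lemma eq_of_cfValue_eq {l₁ l₂ : List ℕ} (h₁ : ∀ x ∈ l₁, 0 < x) (h₂ : ∀ x ∈ l₂, 0 < x)
    (hlen : l₁.length = l₂.length) (hv : cfValue l₁ = cfValue l₂) : l₁ = l₂ := by
  induction l₁ generalizing l₂ with
  | nil => exact (List.length_eq_zero_iff.mp hlen.symm).symm
  | cons a t₁ ih =>
    obtain _ | ⟨b, t₂⟩ := l₂
    · simp at hlen
    have ht₁ : ∀ x ∈ t₁, 0 < x := fun x hx => h₁ x (List.mem_cons_of_mem a hx)
    have ht₂ : ∀ x ∈ t₂, 0 < x := fun x hx => h₂ x (List.mem_cons_of_mem b hx)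
    have hlen' : t₁.length = t₂.length := by simpa using hlen
    rcases eq_or_ne t₁ [] with rfl | hne₁
    · obtain rfl : t₂ = [] := List.length_eq_zero_iff.mp hlen'.symm
      have : (a : ℚ) = b := by rwa [cfValue_singleton, cfValue_singleton] at hv
      rw [Nat.cast_injective this]
    have hne₂ : t₂ ≠ [] := by rintro rfl; exact hne₁ (List.length_eq_zero_iff.mp hlen')
    rw [cfValue_cons hne₁, cfValue_cons hne₂] at hv
    obtain ⟨hx₁, hy₁⟩ := one_div_cfValue_mem_Ioc ht₁ hne₁
    obtain ⟨hx₂, hy₂⟩ := one_div_cfValue_mem_Ioc ht₂ hne₂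
    obtain rfl : a = b := by
      have hab : (a : ℚ) < b + 1 := by linarith
      have hba : (b : ℚ) < a + 1 := by linarith
      exact_mod_cast le_antisymm (Nat.lt_succ_iff.mp (by exact_mod_cast hab))
        (Nat.lt_succ_iff.mp (by exact_mod_cast hba))
    have htail : cfValue t₁ = cfValue t₂ := by
      simpa using (add_left_cancel hv : 1 / cfValue t₁ = 1 / cfValue t₂)
    rw [ih ht₁ ht₂ hlen' htail]

def quotMatrix (a : ℕ) : Matrix (Fin 2) (Fin 2) ℤ := !![(a : ℤ), 1; 1, 0]

def cfMatrix (l : List ℕ) : Matrix (Fin 2) (Fin 2) ℤ := (l.map quotMatrix).prod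

lemma transpose_quotMatrix (a : ℕ) : (quotMatrix a)ᵀ = quotMatrix a := by
  ext i j
  fin_cases i <;> fin_cases j <;> rfl

lemma cfMatrix_reverse (l : List ℕ) : cfMatrix l.reverse = (cfMatrix l)ᵀ := by
  simp [cfMatrix, transpose_list_prod, Function.comp_def, transpose_quotMatrix]

lemma det_quotMatrix (a : ℕ) : (quotMatrix a).det = -1 := by
  simp [quotMatrix, det_fin_two_of]

lemma det_cfMatrix (l : List ℕ) : (cfMatrix l).det = (-1) ^ l.length := by
  induction l with
  | nil => simp [cfMatrix]
  | cons a t ih =>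
    simp only [cfMatrix, List.map_cons, List.prod_cons, det_mul, det_quotMatrix] at ih ⊢
    rw [ih, List.length_cons, pow_succ']

lemma cfMatrix_cons_zero_zero (a : ℕ) (l : List ℕ) :
    cfMatrix (a :: l) 0 0 = a * cfMatrix l 0 0 + cfMatrix l 1 0 := by
  simp [cfMatrix, quotMatrix, mul_apply, Fin.sum_univ_two]

lemma cfMatrix_cons_one_zero (a : ℕ) (l : List ℕ) :
    cfMatrix (a :: l) 1 0 = cfMatrix l 0 0 := by
  simp [cfMatrix, quotMatrix, mul_apply, Fin.sum_univ_two]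

lemma cfMatrix_nonneg (l : List ℕ) (i j : Fin 2) : 0 ≤ cfMatrix l i j := by
  induction l generalizing i j with
  | nil => fin_cases i <;> fin_cases j <;> simp [cfMatrix]
  | cons a t ih =>
    simp only [cfMatrix, List.map_cons, List.prod_cons] at ih ⊢
    rw [mul_apply]
    refine Finset.sum_nonneg fun k _ => mul_nonneg ?_ (ih k j)
    fin_cases i <;> fin_cases k <;> simp [quotMatrix]

lemma cfMatrix_zero_zero_pos {l : List ℕ} (hpos : ∀ x ∈ l, 0 < x) : 0 < cfMatrix l 0 0 := by
  induction l with
  | nil => simp [cfMatrix]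
  | cons a t ih =>
    have hp := ih (fun x hx => hpos x (List.mem_cons_of_mem a hx))
    have ha : (1 : ℤ) ≤ a := by exact_mod_cast hpos a List.mem_cons_self
    rw [cfMatrix_cons_zero_zero]
    nlinarith [cfMatrix_nonneg t 1 0]

lemma cfMatrix_one_zero_pos {l : List ℕ} (hpos : ∀ x ∈ l, 0 < x) (hne : l ≠ []) :
    0 < cfMatrix l 1 0 := by
  obtain _ | ⟨a, t⟩ := l
  · exact absurd rfl hne
  rw [cfMatrix_cons_one_zero]
  exact cfMatrix_zero_zero_pos fun x hx => hpos x (List.mem_cons_of_mem a hx)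

lemma cfMatrix_one_zero_lt {l : List ℕ} (hpos : ∀ x ∈ l, 0 < x) (hlen : 2 ≤ l.length) :
    cfMatrix l 1 0 < cfMatrix l 0 0 := by
  obtain _ | ⟨a, t⟩ := l
  · simp at hlen
  have ht : ∀ x ∈ t, 0 < x := fun x hx => hpos x (List.mem_cons_of_mem a hx)
  have hne : t ≠ [] := by rintro rfl; simp at hlen
  have ha : (1 : ℤ) ≤ a := by exact_mod_cast hpos a List.mem_cons_self
  rw [cfMatrix_cons_zero_zero, cfMatrix_cons_one_zero]
  nlinarith [cfMatrix_zero_zero_pos ht, cfMatrix_one_zero_pos ht hne]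

lemma cfMatrix_zero_one_lt {l : List ℕ} (hpos : ∀ x ∈ l, 0 < x) (hlen : 2 ≤ l.length) :
    cfMatrix l 0 1 < cfMatrix l 0 0 := by
  simpa [cfMatrix_reverse] using
    cfMatrix_one_zero_lt (l := l.reverse) (fun x hx => hpos x (List.mem_reverse.mp hx))
      (by rwa [List.length_reverse])

lemma cfValue_eq_div {l : List ℕ} (hpos : ∀ x ∈ l, 0 < x) (hne : l ≠ []) :
    cfValue l = cfMatrix l 0 0 / cfMatrix l 1 0 := by
  induction l with
  | nil => exact absurd rfl hne
  | cons a t ih =>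
    rcases eq_or_ne t [] with rfl | ht
    · simp [cfValue_singleton, cfMatrix, quotMatrix]
    have htpos : ∀ x ∈ t, 0 < x := fun x hx => hpos x (List.mem_cons_of_mem a hx)
    have hp : (0 : ℚ) < cfMatrix t 0 0 := by exact_mod_cast cfMatrix_zero_zero_pos htpos
    rw [cfValue_cons ht, ih htpos ht, cfMatrix_cons_zero_zero, cfMatrix_cons_one_zero]
    push_cast
    field_simp

lemma isCoprime_cfMatrix (l : List ℕ) : IsCoprime (cfMatrix l 0 0) (cfMatrix l 1 0) := by
  have hdet : cfMatrix l 0 0 * cfMatrix l 1 1 - cfMatrix l 0 1 * cfMatrix l 1 0 =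
      (-1) ^ l.length := by
    rw [← det_fin_two, det_cfMatrix]
  refine ⟨(-1) ^ l.length * cfMatrix l 1 1, -((-1) ^ l.length * cfMatrix l 0 1), ?_⟩
  have hsq : ((-1 : ℤ) ^ l.length) ^ 2 = 1 := by rw [pow_right_comm, neg_one_sq, one_pow]
  linear_combination (-1 : ℤ) ^ l.length * hdet + hsq

lemma num_cfValue {l : List ℕ} (hpos : ∀ x ∈ l, 0 < x) (hne : l ≠ []) :
    (cfValue l).num = cfMatrix l 0 0 := by
  rw [cfValue_eq_div hpos hne]
  exact Rat.num_div_eq_of_coprime (cfMatrix_one_zero_pos hpos hne)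
    (Int.isCoprime_iff_nat_coprime.mp (isCoprime_cfMatrix l))

lemma den_cfValue {l : List ℕ} (hpos : ∀ x ∈ l, 0 < x) (hne : l ≠ []) :
    ((cfValue l).den : ℤ) = cfMatrix l 1 0 := by
  rw [cfValue_eq_div hpos hne]
  exact Rat.den_div_eq_of_coprime (cfMatrix_one_zero_pos hpos hne)
    (Int.isCoprime_iff_nat_coprime.mp (isCoprime_cfMatrix l))

lemma reverse_eq_self_iff_cfMatrix {l : List ℕ} (hpos : ∀ x ∈ l, 0 < x) (hne : l ≠ []) :
    l.reverse = l ↔ cfMatrix l 0 1 = cfMatrix l 1 0 := by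
  have hrev : ∀ x ∈ l.reverse, 0 < x := fun x hx => hpos x (List.mem_reverse.mp hx)
  have hrevne : l.reverse ≠ [] := List.reverse_ne_nil_iff.mpr hne
  constructor
  · intro h
    rw [← transpose_apply (cfMatrix l), ← cfMatrix_reverse, h]
  · intro h
    refine eq_of_cfValue_eq hrev hpos List.length_reverse ?_
    rw [cfValue_eq_div hrev hrevne, cfValue_eq_div hpos hne, cfMatrix_reverse, transpose_apply,
      transpose_apply, h]

/-- Modulo `p`, `q² + (p s - r q) ≡ q (q - r)`, and `q` is a unit. -/
lemma dvd_sq_add_det_iff {p q r s : ℤ} (hpq : IsCoprime p q) (hq : 0 ≤ q) (hqp : q < p)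
    (hr : 0 ≤ r) (hrp : r < p) : p ∣ q ^ 2 + (p * s - r * q) ↔ r = q := by
  constructor
  · intro h
    have hmul : p ∣ q * (q - r) := by
      have : q * (q - r) = q ^ 2 + (p * s - r * q) - p * s := by ring
      rw [this]
      exact dvd_sub h (dvd_mul_right p s)
    have hzero := Int.eq_zero_of_abs_lt_dvd (hpq.dvd_of_dvd_mul_left hmul) (abs_sub_lt_iff.mpr
      ⟨by linarith, by linarith⟩)
    linarith
  · rintro rfl
    exact ⟨s, by ring⟩

/-- Let p/q = [a₁,...,aₙ] in lowest terms, n ≥ 3. Then (a₁,...,aₙ) is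
palindromic iff p divides q² + (−1)ⁿ. -/
theorem stmt10 (l : List ℕ) (hl : 3 ≤ l.length) (hpos : ∀ x ∈ l, 0 < x) :
    l.reverse = l ↔
      (cfQ (l.map (fun x => (x : ℚ)))).num ∣
        ((cfQ (l.map (fun x => (x : ℚ)))).den : ℤ) ^ 2 + (-1 : ℤ) ^ l.length := by
  change l.reverse = l ↔ (cfValue l).num ∣ ((cfValue l).den : ℤ) ^ 2 + (-1 : ℤ) ^ l.length
  have hne : l ≠ [] := by rintro rfl; simp at hl
  rw [num_cfValue hpos hne, den_cfValue hpos hne, reverse_eq_self_iff_cfMatrix hpos hne,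
    ← det_cfMatrix, det_fin_two]
  exact (dvd_sq_add_det_iff (isCoprime_cfMatrix l) (cfMatrix_nonneg l 1 0)
    (cfMatrix_one_zero_lt hpos (by omega)) (cfMatrix_nonneg l 0 1)
    (cfMatrix_zero_one_lt hpos (by omega))).symm
end

section
/- If p and q are relatively prime positive integers with p > q and at least one of p, q is even, then p/q has an even continued fraction expansion: there exists a sequence of nonzero even integers b_1,...,b_m with [b_1,...,b_m] = p/q. -/
lemma cfQ_cons (a : ℚ) (l : List ℚ) (h : l ≠ []) : cfQ (a :: l) = a + 1 / cfQ l := by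
  match l with
  | [] => exact absurd rfl h
  | b :: l => rfl

lemma cfQ_neg (l : List ℚ) : cfQ (l.map (fun x => -x)) = - cfQ l := by
  match l with
  | [] => simp [cfQ]
  | [a] => simp [cfQ]
  | a :: b :: l =>
    have ih := cfQ_neg (b :: l)
    simp only [List.map_cons] at ih ⊢
    simp only [cfQ, ih, div_neg]
    ring

lemma cfQ_neg' (l : List ℤ) :
    cfQ ((l.map (fun x : ℤ => -x)).map (fun x : ℤ => (x : ℚ))) =
      - cfQ (l.map (fun x : ℤ => (x : ℚ))) := by
  match l with
  | [] => simp [cfQ]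
  | [a] => simp [cfQ]
  | a :: b :: l =>
    have ih := cfQ_neg' (b :: l)
    simp only [List.map_cons] at ih ⊢
    simp only [cfQ, ih, div_neg]
    push_cast
    ring

lemma neg_good (b : List ℤ)
    (hmem : ∀ x ∈ b, x ≠ 0 ∧ Even x)
    (hsuf : ∀ t : List ℤ, t ≠ [] → t <:+ b → cfQ (t.map (fun x : ℤ => (x : ℚ))) ≠ 0) :
    (∀ x ∈ b.map (fun x : ℤ => -x), x ≠ 0 ∧ Even x) ∧
    (∀ t : List ℤ, t ≠ [] → t <:+ b.map (fun x : ℤ => -x) →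
      cfQ (t.map (fun x : ℤ => (x : ℚ))) ≠ 0) := by
  have hinv : ∀ t : List ℤ, (t.map (fun x : ℤ => -x)).map (fun x : ℤ => -x) = t := by
    intro t
    rw [List.map_map]
    have : ((fun x : ℤ => -x) ∘ (fun x : ℤ => -x)) = id := by funext x; simp
    rw [this, List.map_id]
  constructor
  · intro x hx
    simp only [List.mem_map] at hx
    obtain ⟨y, hy, rfl⟩ := hx
    obtain ⟨h1, h2⟩ := hmem y hy
    exact ⟨neg_ne_zero.mpr h1, h2.neg⟩
  · intro t ht hts
    have h1 : t.map (fun x : ℤ => -x) <:+ b := by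
      have := hts.map (fun x : ℤ => -x)
      rwa [hinv] at this
    have h2 := hsuf (t.map (fun x : ℤ => -x)) (by simpa using ht) h1
    have h3 := cfQ_neg' (t.map (fun x : ℤ => -x))
    rw [hinv] at h3
    intro hc
    rw [hc] at h3
    exact h2 (neg_eq_zero.mp h3.symm)

lemma key : ∀ q : ℕ, ∀ p : ℕ, 0 < q → q < p → Nat.Coprime p q → (Even p ∨ Even q) →
    ∃ b : List ℤ, b ≠ [] ∧ (∀ x ∈ b, x ≠ 0 ∧ Even x) ∧
      (∀ t : List ℤ, t ≠ [] → t <:+ b → cfQ (t.map (fun x : ℤ => (x : ℚ))) ≠ 0) ∧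
      cfQ (b.map (fun x : ℤ => (x : ℚ))) = (p : ℚ) / (q : ℚ) := by
  intro q
  induction q using Nat.strong_induction_on with
  | _ q IH =>
  intro p hq hpq hcop h
  set K : ℕ := (p + q) / (2 * q) with hK
  have h2q : 0 < 2 * q := by omega
  have hdm := Nat.div_add_mod (p + q) (2 * q)
  have hmlt := Nat.mod_lt (p + q) h2q
  set m : ℕ := (p + q) % (2 * q) with hm
  have hdmZ : (2 : ℤ) * q * K + m = p + q := by exact_mod_cast hdm
  set r : ℤ := (m : ℤ) - (q : ℤ) with hr
  have hrval : (p : ℤ) = 2 * K * q + r := by rw [hr]; linear_combination -hdmZ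
  have hmZ : (m : ℤ) < 2 * q := by exact_mod_cast hmlt
  have hm0 : (0 : ℤ) ≤ m := by positivity
  have hrlt : r < q := by rw [hr]; omega
  have hrge : -(q : ℤ) ≤ r := by rw [hr]; omega
  have hK1 : 1 ≤ K := by rw [hK, Nat.one_le_div_iff h2q]; omega
  have hpar : Even r ↔ Even p := by
    have hre : r = (p : ℤ) - 2 * (K * q) := by rw [hrval]; ring
    rw [hre, Int.even_sub]
    simp [Int.even_coe_nat, even_two_mul]
  have hboth : ¬ (Even p ∧ Even q) := by
    rintro ⟨⟨a, ha⟩, ⟨c, hc⟩⟩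
    have := Nat.dvd_gcd (⟨a, by omega⟩ : 2 ∣ p) (⟨c, by omega⟩ : 2 ∣ q)
    rw [Nat.Coprime] at hcop
    omega
  have hrneq : r ≠ -(q : ℤ) := by
    intro hc
    have hq_even : Even r ↔ Even q := by
      rw [hc, even_neg, Int.even_coe_nat]
    rcases h with hp | hqe
    · exact hboth ⟨hp, hq_even.mp (hpar.mpr hp)⟩
    · exact hboth ⟨hpar.mp (hq_even.mpr hqe), hqe⟩
  have hqQ : (q : ℚ) ≠ 0 := by positivity
  by_cases hr0 : r = 0
  · -- p = 2Kq, so q = 1, take b = [p]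
    have hpeq : (p : ℤ) = 2 * K * q := by rw [hrval, hr0]; ring
    have hpeqN : p = 2 * K * q := by exact_mod_cast hpeq
    have hqdp : q ∣ p := ⟨2 * K, by rw [hpeqN]; ring⟩
    have hq1 : q = 1 := by
      have hdq : q ∣ Nat.gcd p q := Nat.dvd_gcd hqdp dvd_rfl
      rw [Nat.Coprime] at hcop
      rw [hcop] at hdq
      exact Nat.dvd_one.mp hdq
    have hpe : Even p := hpar.mp (by rw [hr0]; exact Even.zero)
    refine ⟨[(p : ℤ)], by simp, ?_, ?_, ?_⟩
    · intro x hx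
      simp only [List.mem_singleton] at hx
      subst hx
      refine ⟨by exact_mod_cast (by omega : p ≠ 0), ?_⟩
      exact (Int.even_coe_nat p).mpr hpe
    · intro t ht hts
      rcases List.suffix_cons_iff.mp hts with rfl | h'
      · simp only [List.map_cons, List.map_nil]
        show ((p : ℤ) : ℚ) ≠ 0
        exact_mod_cast (by omega : p ≠ 0)
      · simp only [List.suffix_nil] at h'
        exact absurd h' ht
    · simp only [List.map_cons, List.map_nil, hq1]
      show ((p : ℤ) : ℚ) = (p : ℚ) / ((1 : ℕ) : ℚ)
      push_cast
      ring
  · -- recursive case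
    set r' : ℕ := r.natAbs with hr'
    have hr'pos : 0 < r' := by rw [hr']; exact Int.natAbs_pos.mpr hr0
    have hr'lt : r' < q := by
      rw [hr']
      omega
    have hcop' : Nat.Coprime q r' := by
      have hc1 : IsCoprime (q : ℤ) (p : ℤ) := by
        rw [Int.isCoprime_iff_gcd_eq_one, Int.gcd_natCast_natCast]
        exact Nat.Coprime.gcd_eq_one (Nat.coprime_comm.mp hcop)
      have hre : r = (p : ℤ) + (q : ℤ) * (-(2 * K)) := by rw [hrval]; push_cast; ring
      have hc2 : IsCoprime (q : ℤ) r := by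
        rw [hre]
        exact hc1.add_mul_left_right _
      have h6 := Int.isCoprime_iff_gcd_eq_one.mp hc2
      show Nat.gcd q r' = 1
      simpa [Int.gcd, hr'] using h6
    have hpar' : Even q ∨ Even r' := by
      rcases h with hp | hqe
      · right; rw [hr', Int.natAbs_even]; exact hpar.mpr hp
      · left; exact hqe
    obtain ⟨l, hl_ne, hl_mem, hl_suf, hl_val⟩ := IH r' hr'lt q hr'pos hr'lt hcop' hpar'
    have hrQ : (r : ℚ) ≠ 0 := by exact_mod_cast hr0
    obtain ⟨l₂, hl₂_ne, hl₂_mem, hl₂_suf, hl₂_val⟩ :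
        ∃ l₂ : List ℤ, l₂ ≠ [] ∧ (∀ x ∈ l₂, x ≠ 0 ∧ Even x) ∧
          (∀ t : List ℤ, t ≠ [] → t <:+ l₂ → cfQ (t.map (fun x : ℤ => (x : ℚ))) ≠ 0) ∧
          cfQ (l₂.map (fun x : ℤ => (x : ℚ))) = (q : ℚ) / (r : ℚ) := by
      rcases le_or_gt 0 r with hpos | hneg
      · refine ⟨l, hl_ne, hl_mem, hl_suf, ?_⟩
        rw [hl_val]
        congr 1
        rw [hr', Nat.cast_natAbs]
        exact_mod_cast abs_of_nonneg hpos
      · obtain ⟨hmem2, hsuf2⟩ := neg_good l hl_mem hl_suf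
        refine ⟨l.map (fun x : ℤ => -x), by simpa using hl_ne, hmem2, hsuf2, ?_⟩
        rw [cfQ_neg', hl_val]
        have habs : ((r.natAbs : ℕ) : ℚ) = -(r : ℚ) := by
          rw [Nat.cast_natAbs]
          exact_mod_cast abs_of_nonpos hneg.le
        rw [hr', habs, div_neg, neg_neg]
    -- assemble
    have hpQ : (p : ℚ) = 2 * (K : ℚ) * (q : ℚ) + (r : ℚ) := by exact_mod_cast hrval
    have hval : cfQ (((2 * K : ℤ) :: l₂).map (fun x : ℤ => (x : ℚ))) = (p : ℚ) / (q : ℚ) := by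
      simp only [List.map_cons]
      rw [cfQ_cons _ _ (by simpa using hl₂_ne), hl₂_val, one_div_div]
      field_simp
      push_cast
      linear_combination -hpQ
    refine ⟨(2 * K : ℤ) :: l₂, by simp, ?_, ?_, ?_⟩
    · intro x hx
      rcases List.mem_cons.mp hx with rfl | hx'
      · refine ⟨?_, ⟨(K : ℤ), by push_cast; ring⟩⟩
        have h8 : (1 : ℤ) ≤ K := by exact_mod_cast hK1
        omega
      · exact hl₂_mem x hx'
    · intro t ht hts
      rcases List.suffix_cons_iff.mp hts with rfl | h'
      · rw [hval]
        have h9 : (0 : ℚ) < (p : ℚ) / (q : ℚ) :=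
          div_pos (by exact_mod_cast (by omega : 0 < p)) (by exact_mod_cast hq)
        exact ne_of_gt h9
      · exact hl₂_suf t ht h'
    · exact hval

lemma mapfix (b : List ℤ) : (b.map (fun x => (x : ℚ))) = b.map (fun x : ℤ => (x : ℚ)) := by
  induction b with
  | nil => rfl
  | cons a l ih => simp [List.flatMap_cons] at ih ⊢; exact ih

/-- If p, q are relatively prime positive integers, p > q, and at least one of
p, q is even, then p/q has an even continued fraction expansion. -/
theorem stmt13 (p q : ℕ) (hq : 0 < q) (hpq : q < p) (hcop : Nat.Coprime p q)
    (h : Even p ∨ Even q) :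
    ∃ b : List ℤ, b ≠ [] ∧ (∀ x ∈ b, x ≠ 0 ∧ Even x) ∧
      (∀ t : List ℤ, t ≠ [] → t <:+ b → cfQ (t.map (fun x => (x : ℚ))) ≠ 0) ∧
      cfQ (b.map (fun x => (x : ℚ))) = (p : ℚ) / (q : ℚ) := by
  simp only [mapfix]
  exact key q p hq hpq hcop h
end
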